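/- Mini-batch variance bound: Let f_i : ℝ^d → ℝ be convex and L-smooth, f = (1/n)∑f_i with minimizer x*. For a uniformly random subset I ⊂ [n] of size b (sampled without replacement), define g_I = (1/b)∑_{i∈I}[∇f_i(x) − ∇f_i(x̃)] + ∇f(x̃). Then E‖g_I − ∇f(x)‖² ≤ 4L δ(b) [ f(x) − f(x*) + f(x̃) − f(x*) ], where δ(b) = (n − b)/((n − 1)b). -/

import Mathlib

/-!
Write `a i = ∇f_i x - ∇f_i x̃`. Since `∇f = (1/n) ∑ ∇f_i`, the error `g_I - ∇f x` is the sample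
mean over `I` of the centred vectors `a i - ā`. Expanding `‖∑_{i ∈ I} (a i - ā)‖²` into inner
products and counting the `b`-subsets that contain one, resp. two, given indices gives the exact
variance of sampling without replacement, `δ(b) · (1/n) ∑ ‖a i - ā‖²`. This is at most
`(1/n) ∑ ‖a i‖²`; splitting `a i` through `∇f_i x*` and using co-coercivity of convex `L`-smooth
functions, `‖∇g p - ∇g q‖² ≤ 2L (g p - g q - ⟪∇g q, p - q⟫)`, summed over `i` with
`∑ ∇f_i x* = 0`, bounds it by `4L (f x - f x* + f x̃ - f x*)`.
-/

open Finset
open scoped Gradient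

section

variable {ι F : Type*} [NormedAddCommGroup F] [InnerProductSpace ℝ F]

lemma norm_sub_sq_le (u v : F) : ‖u - v‖ ^ 2 ≤ 2 * ‖u‖ ^ 2 + 2 * ‖v‖ ^ 2 := by
  have := parallelogram_law_with_norm ℝ u v
  nlinarith [sq_nonneg ‖u + v‖]

namespace Finset

lemma sum_norm_sub_mean_sq_le (t : Finset ι) (a : ι → F) :
    ∑ i ∈ t, ‖a i - (#t : ℝ)⁻¹ • ∑ j ∈ t, a j‖ ^ 2 ≤ ∑ i ∈ t, ‖a i‖ ^ 2 := by
  rcases t.eq_empty_or_nonempty with rfl | ht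
  · simp
  set m := (#t : ℝ)⁻¹ • ∑ j ∈ t, a j
  have hsum : ∑ j ∈ t, a j = (#t : ℝ) • m := (smul_inv_smul₀ (by positivity) _).symm
  have hexpand : ∑ i ∈ t, ‖a i - m‖ ^ 2 = ∑ i ∈ t, ‖a i‖ ^ 2 - #t * ‖m‖ ^ 2 := by
    simp only [norm_sub_sq_real, sum_add_distrib, sum_sub_distrib, ← mul_sum, ← sum_inner, hsum,
      real_inner_smul_left, real_inner_self_eq_norm_sq, sum_const, nsmul_eq_mul]
    ring
  rw [hexpand]
  exact sub_le_self _ (mul_nonneg (Nat.cast_nonneg _) (sq_nonneg _))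

variable [DecidableEq ι]

lemma card_filter_powersetCard_subset_mul_choose {s t : Finset ι} (hst : s ⊆ t) (b : ℕ) :
    #{I ∈ t.powersetCard b | s ⊆ I} * (#t).choose #s = (#t).choose b * b.choose #s := by
  rcases le_or_gt #s b with hsb | hbs
  · rw [card_filter_powersetCard_subset s t b hst hsb, mul_comm, Nat.choose_mul hsb]
  · have hempty : {I ∈ t.powersetCard b | s ⊆ I} = ∅ := by
      refine filter_eq_empty_iff.2 fun I hI hsI => ?_
      have := card_le_card hsI
      rw [(mem_powersetCard.1 hI).2] at this
      omega
    simp [hempty, Nat.choose_eq_zero_of_lt hbs]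

lemma sum_powersetCard_sum_sum {M : Type*} [AddCommMonoid M] (t : Finset ι) (b : ℕ)
    (q : ι → ι → M) :
    ∑ I ∈ t.powersetCard b, ∑ i ∈ I, ∑ j ∈ I, q i j
      = ∑ i ∈ t, ∑ j ∈ t, #{I ∈ t.powersetCard b | {i, j} ⊆ I} • q i j := by
  have hsum_ite : ∀ I ∈ t.powersetCard b, ∑ i ∈ I, ∑ j ∈ I, q i j
      = ∑ i ∈ t, ∑ j ∈ t, if {i, j} ⊆ I then q i j else 0 := by
    intro I hI
    have hIt : t ∩ I = I := inter_eq_right.2 (mem_powersetCard.1 hI).1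
    simp only [insert_subset_iff, singleton_subset_iff, ite_and, sum_ite_irrel, sum_const_zero,
      sum_ite_mem, hIt]
  rw [sum_congr rfl hsum_ite, sum_comm]
  refine sum_congr rfl fun i _ => ?_
  rw [sum_comm]
  exact sum_congr rfl fun j _ => by rw [← sum_filter, sum_const]

-- Multiplied out, so that it holds for every `b` without truncated subtraction in `b - 2`.
lemma card_filter_powersetCard_pair_subset_mul {t : Finset ι} {i j : ι} (hi : i ∈ t) (hj : j ∈ t)
    (b : ℕ) :
    (#{I ∈ t.powersetCard b | {i, j} ⊆ I} : ℝ) * (#t * (#t - 1))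
      = (#t).choose b * b * (b - 1) + if i = j then ((#t).choose b * b * (#t - b) : ℝ) else 0 := by
  split_ifs with hij
  · subst hij
    have hcount := card_filter_powersetCard_subset_mul_choose (singleton_subset_iff.2 hi) b
    rw [card_singleton, Nat.choose_one_right, Nat.choose_one_right] at hcount
    rw [pair_eq_singleton]
    have hcount' : (#{I ∈ t.powersetCard b | {i} ⊆ I} : ℝ) * #t = (#t).choose b * b := by
      exact_mod_cast hcount
    linear_combination ((#t : ℝ) - 1) * hcount'
  · have hcount := card_filter_powersetCard_subset_mul_choose (insert_subset hi
      (singleton_subset_iff.2 hj)) b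
    rw [card_pair hij] at hcount
    have hcount' : (#{I ∈ t.powersetCard b | {i, j} ⊆ I} : ℝ) * (#t * (#t - 1) / 2)
        = (#t).choose b * (b * (b - 1) / 2) := by
      rw [← Nat.cast_choose_two, ← Nat.cast_choose_two]
      exact_mod_cast hcount
    linear_combination 2 * hcount'

lemma sum_powersetCard_norm_sum_sq_mul (t : Finset ι) (b : ℕ) (c : ι → F)
    (hc : ∑ i ∈ t, c i = 0) :
    (∑ I ∈ t.powersetCard b, ‖∑ i ∈ I, c i‖ ^ 2) * (#t * (#t - 1))
      = (#t).choose b * b * (#t - b) * ∑ i ∈ t, ‖c i‖ ^ 2 := by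
  have hnorm : ∀ I : Finset ι, ‖∑ i ∈ I, c i‖ ^ 2 = ∑ i ∈ I, ∑ j ∈ I, inner ℝ (c i) (c j) := by
    intro I
    rw [← real_inner_self_eq_norm_sq, sum_inner]
    simp only [inner_sum]
  have hcross : ∑ i ∈ t, ∑ j ∈ t, inner ℝ (c i) (c j) = 0 := by
    simp only [← inner_sum, ← sum_inner, hc, inner_zero_left]
  calc (∑ I ∈ t.powersetCard b, ‖∑ i ∈ I, c i‖ ^ 2) * (#t * (#t - 1))
      = ∑ i ∈ t, ∑ j ∈ t,
          (((#t).choose b : ℝ) * b * (b - 1)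
            + if i = j then ((#t).choose b : ℝ) * b * (#t - b) else 0) * inner ℝ (c i) (c j) := by
        simp only [hnorm, sum_powersetCard_sum_sum, nsmul_eq_mul, sum_mul]
        refine sum_congr rfl fun i hi => sum_congr rfl fun j hj => ?_
        rw [mul_right_comm, card_filter_powersetCard_pair_subset_mul hi hj]
    _ = (#t).choose b * b * (b - 1) * ∑ i ∈ t, ∑ j ∈ t, inner ℝ (c i) (c j)
          + (#t).choose b * b * (#t - b) * ∑ i ∈ t, inner ℝ (c i) (c i) := by
        simp only [add_mul, ite_mul, zero_mul, sum_add_distrib, sum_ite_eq, sum_ite_mem, inter_self,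
          mul_sum]
    _ = (#t).choose b * b * (#t - b) * ∑ i ∈ t, ‖c i‖ ^ 2 := by
        simp only [hcross, mul_zero, zero_add, real_inner_self_eq_norm_sq]

lemma average_powersetCard_norm_smul_sum_sub_mean_sq {t : Finset ι} {b : ℕ} (hb : 0 < b)
    (hbt : b ≤ #t) (ht : 1 < #t) (a : ι → F) :
    (#(t.powersetCard b) : ℝ)⁻¹ * ∑ I ∈ t.powersetCard b,
        ‖(b : ℝ)⁻¹ • ∑ i ∈ I, a i - (#t : ℝ)⁻¹ • ∑ i ∈ t, a i‖ ^ 2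
      = (#t - b) / ((#t - 1) * b) *
          ((#t : ℝ)⁻¹ * ∑ i ∈ t, ‖a i - (#t : ℝ)⁻¹ • ∑ j ∈ t, a j‖ ^ 2) := by
  set m := (#t : ℝ)⁻¹ • ∑ i ∈ t, a i
  have hb' : (b : ℝ) ≠ 0 := by positivity
  have ht' : (#t : ℝ) - 1 ≠ 0 := by
    rw [sub_ne_zero]; exact_mod_cast ht.ne'
  have hchoose : ((#t).choose b : ℝ) ≠ 0 := by exact_mod_cast (Nat.choose_pos hbt).ne'
  have hcentered : ∑ i ∈ t, (a i - m) = 0 := by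
    rw [sum_sub_distrib, sum_const, ← Nat.cast_smul_eq_nsmul ℝ,
      smul_inv_smul₀ (by positivity), sub_self]
  have hsample : ∀ I ∈ t.powersetCard b,
      ‖(b : ℝ)⁻¹ • ∑ i ∈ I, a i - m‖ ^ 2 = (b : ℝ)⁻¹ ^ 2 * ‖∑ i ∈ I, (a i - m)‖ ^ 2 := by
    intro I hI
    have hscale : ∑ i ∈ I, (a i - m) = (b : ℝ) • ((b : ℝ)⁻¹ • ∑ i ∈ I, a i - m) := by
      rw [smul_sub, smul_inv_smul₀ hb', sum_sub_distrib, sum_const, (mem_powersetCard.1 hI).2,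
        Nat.cast_smul_eq_nsmul]
    rw [hscale, norm_smul, mul_pow, ← mul_assoc, ← mul_pow, Real.norm_natCast,
      inv_mul_cancel₀ hb', one_pow, one_mul]
  have hid := sum_powersetCard_norm_sum_sq_mul t b (fun i => a i - m) hcentered
  rw [sum_congr rfl hsample, ← mul_sum, card_powersetCard]
  field_simp
  linear_combination hid

end Finset

variable [CompleteSpace F] {g : F → ℝ}

lemma hasDerivAt_comp_add_smul {p v : F} {t : ℝ} (hg : DifferentiableAt ℝ g (p + t • v)) :
    HasDerivAt (fun s : ℝ => g (p + s • v)) (inner ℝ (∇ g (p + t • v)) v) t := by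
  have hline : HasDerivAt (fun s : ℝ => p + s • v) v t := by
    simpa using ((hasDerivAt_id t).smul_const v).const_add p
  have h := hg.hasFDerivAt.comp_hasDerivAt t hline
  rwa [← inner_gradient_left] at h

lemma le_add_inner_gradient_add_sq {L : ℝ} (hg : Differentiable ℝ g)
    (hlip : ∀ u w, ‖∇ g u - ∇ g w‖ ≤ L * ‖u - w‖) (p q : F) :
    g q ≤ g p + inner ℝ (∇ g p) (q - p) + L / 2 * ‖q - p‖ ^ 2 := by
  set v := q - p
  set φ : ℝ → ℝ := fun t => g (p + t • v) - t * inner ℝ (∇ g p) v - L / 2 * t ^ 2 * ‖v‖ ^ 2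
  have hφ : ∀ t, HasDerivAt φ
      (inner ℝ (∇ g (p + t • v) - ∇ g p) v - L * t * ‖v‖ ^ 2) t := by
    intro t
    have := (((hasDerivAt_comp_add_smul (p := p) (v := v) (hg _)).sub ((hasDerivAt_id t).mul_const
      (inner ℝ (∇ g p) v))).sub (((hasDerivAt_pow 2 t).const_mul (L / 2)).mul_const (‖v‖ ^ 2)))
    refine this.congr_deriv ?_
    rw [inner_sub_left]
    ring
  have hφ_nonpos : ∀ t ∈ interior (Set.Icc (0 : ℝ) 1),
      inner ℝ (∇ g (p + t • v) - ∇ g p) v - L * t * ‖v‖ ^ 2 ≤ 0 := by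
    intro t ht
    rw [interior_Icc] at ht
    have hlip_t : ‖∇ g (p + t • v) - ∇ g p‖ ≤ L * (t * ‖v‖) := by
      simpa [norm_smul, abs_of_pos ht.1] using hlip (p + t • v) p
    have := real_inner_le_norm (∇ g (p + t • v) - ∇ g p) v
    nlinarith [norm_nonneg v]
  have hanti : AntitoneOn φ (Set.Icc 0 1) :=
    antitoneOn_of_hasDerivWithinAt_nonpos (convex_Icc 0 1)
      (HasDerivAt.continuousOn fun t _ => hφ t) (fun t _ => (hφ t).hasDerivWithinAt) hφ_nonpos
  have h01 := hanti (Set.left_mem_Icc.2 zero_le_one) (Set.right_mem_Icc.2 zero_le_one)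
    zero_le_one
  simp only [φ, v, one_smul, zero_smul, add_zero, add_sub_cancel] at h01
  linarith

lemma ConvexOn.add_inner_gradient_le (hconv : ConvexOn ℝ Set.univ g)
    (hg : Differentiable ℝ g) (p q : F) :
    g p + inner ℝ (∇ g p) (q - p) ≤ g q := by
  have hline : ConvexOn ℝ Set.univ fun t : ℝ => g (p + t • (q - p)) := by
    have h := hconv.comp_affineMap (AffineMap.lineMap (k := ℝ) p q)
    rw [Set.preimage_univ] at h
    refine h.congr fun t _ => ?_
    simp [AffineMap.lineMap_apply_module', add_comm]
  have hslope := hline.le_slope_of_hasDerivAt (Set.mem_univ 0) (Set.mem_univ 1) zero_lt_one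
    (hasDerivAt_comp_add_smul (by simpa using hg p))
  simp only [slope_def_field, sub_zero, div_one, one_smul, zero_smul, add_zero,
    add_sub_cancel] at hslope
  linarith

-- A gradient step of length `1 / L` from `p` lowers `g` by at least `‖∇g p‖² / (2L)`.
lemma sq_norm_gradient_le_of_forall_le {L : ℝ} (hL : 0 < L) (hg : Differentiable ℝ g)
    (hlip : ∀ u w, ‖∇ g u - ∇ g w‖ ≤ L * ‖u - w‖) {q : F} (hmin : ∀ z, g q ≤ g z) (p : F) :
    ‖∇ g p‖ ^ 2 ≤ 2 * L * (g p - g q) := by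
  have hstep := le_add_inner_gradient_add_sq hg hlip p (p - L⁻¹ • ∇ g p)
  rw [sub_sub_cancel_left, inner_neg_right, real_inner_smul_right, real_inner_self_eq_norm_sq,
    norm_neg, norm_smul, mul_pow, Real.norm_eq_abs, sq_abs] at hstep
  have hdecrease : g q ≤ g p - ‖∇ g p‖ ^ 2 / (2 * L) := by
    refine (hmin _).trans (hstep.trans_eq ?_)
    field_simp
    ring
  rw [le_sub_iff_add_le, ← le_sub_iff_add_le', div_le_iff₀ (by positivity)] at hdecrease
  linarith

lemma hasGradientAt_sub_inner {p : F} (hg : DifferentiableAt ℝ g p) (c : F) :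
    HasGradientAt (fun z => g z - inner ℝ c z) (∇ g p - c) p := by
  have hinner : HasFDerivAt (fun z => inner ℝ c z) (InnerProductSpace.toDual ℝ F c) p :=
    (InnerProductSpace.toDual ℝ F c).hasFDerivAt
  rw [hasGradientAt_iff_hasFDerivAt, map_sub]
  exact hg.hasGradientAt.hasFDerivAt.sub hinner

-- Apply the previous bound to `g - ⟪∇g q, ·⟫`, which by convexity is minimal at `q`.
lemma ConvexOn.sq_norm_gradient_sub_le {L : ℝ} (hconv : ConvexOn ℝ Set.univ g) (hL : 0 < L)
    (hg : Differentiable ℝ g) (hlip : ∀ u w, ‖∇ g u - ∇ g w‖ ≤ L * ‖u - w‖) (p q : F) :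
    ‖∇ g p - ∇ g q‖ ^ 2 ≤ 2 * L * (g p - g q - inner ℝ (∇ g q) (p - q)) := by
  set h : F → ℝ := fun z => g z - inner ℝ (∇ g q) z
  have hgrad : ∀ z, ∇ h z = ∇ g z - ∇ g q := fun z => (hasGradientAt_sub_inner (hg z) _).gradient
  have hh : Differentiable ℝ h := fun z => (hasGradientAt_sub_inner (hg z) _).differentiableAt
  have hlip_h : ∀ u w, ‖∇ h u - ∇ h w‖ ≤ L * ‖u - w‖ := by
    simpa only [hgrad, sub_sub_sub_cancel_right] using hlip
  have hmin : ∀ z, h q ≤ h z := by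
    intro z
    have := hconv.add_inner_gradient_le hg q z
    simp only [h, inner_sub_right] at this ⊢
    linarith
  have := sq_norm_gradient_le_of_forall_le hL hh hlip_h hmin p
  simp only [hgrad, h] at this
  rw [inner_sub_right]
  linarith

lemma IsLocalMin.gradient_eq_zero {x : F} (h : IsLocalMin g x) : ∇ g x = 0 := by
  rw [gradient, h.fderiv_eq_zero, map_zero]

lemma gradient_const_mul_sum (s : Finset ι) (a : ℝ) {f : ι → F → ℝ} {x : F}
    (hf : ∀ i ∈ s, DifferentiableAt ℝ (f i) x) :
    ∇ (fun y => a * ∑ i ∈ s, f i y) x = a • ∑ i ∈ s, ∇ (f i) x := by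
  refine HasGradientAt.gradient ?_
  rw [hasGradientAt_iff_hasFDerivAt, map_smul, map_sum]
  exact (HasFDerivAt.fun_sum fun i hi => (hf i hi).hasGradientAt.hasFDerivAt).const_mul a

lemma sum_sq_norm_gradient_sub_le (s : Finset ι) {L : ℝ} (hL : 0 < L)
    {f : ι → F → ℝ} (hconv : ∀ i, ConvexOn ℝ Set.univ (f i)) (hdiff : ∀ i, Differentiable ℝ (f i))
    (hlip : ∀ i u w, ‖∇ (f i) u - ∇ (f i) w‖ ≤ L * ‖u - w‖) {xstar : F}
    (hstar : ∑ i ∈ s, ∇ (f i) xstar = 0) (z : F) :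
    ∑ i ∈ s, ‖∇ (f i) z - ∇ (f i) xstar‖ ^ 2
      ≤ 2 * L * (∑ i ∈ s, f i z - ∑ i ∈ s, f i xstar) := by
  calc ∑ i ∈ s, ‖∇ (f i) z - ∇ (f i) xstar‖ ^ 2
      ≤ ∑ i ∈ s, 2 * L * (f i z - f i xstar - inner ℝ (∇ (f i) xstar) (z - xstar)) :=
        sum_le_sum fun i _ =>
          (hconv i).sq_norm_gradient_sub_le hL (hdiff i) (hlip i) z xstar
    _ = 2 * L * (∑ i ∈ s, f i z - ∑ i ∈ s, f i xstar) := by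
        rw [← mul_sum, sum_sub_distrib, sum_sub_distrib, ← sum_inner, hstar,
          inner_zero_left, sub_zero]

lemma sum_sq_norm_gradient_sub_gradient_le (s : Finset ι) {L : ℝ} (hL : 0 < L)
    {f : ι → F → ℝ} (hconv : ∀ i, ConvexOn ℝ Set.univ (f i)) (hdiff : ∀ i, Differentiable ℝ (f i))
    (hlip : ∀ i u w, ‖∇ (f i) u - ∇ (f i) w‖ ≤ L * ‖u - w‖) {xstar : F}
    (hstar : ∑ i ∈ s, ∇ (f i) xstar = 0) (x y : F) :
    ∑ i ∈ s, ‖∇ (f i) x - ∇ (f i) y‖ ^ 2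
      ≤ 4 * L * ((∑ i ∈ s, f i x - ∑ i ∈ s, f i xstar)
        + (∑ i ∈ s, f i y - ∑ i ∈ s, f i xstar)) := by
  calc ∑ i ∈ s, ‖∇ (f i) x - ∇ (f i) y‖ ^ 2
      ≤ ∑ i ∈ s, (2 * ‖∇ (f i) x - ∇ (f i) xstar‖ ^ 2 + 2 * ‖∇ (f i) y - ∇ (f i) xstar‖ ^ 2) :=
        sum_le_sum fun i _ => by
          rw [← sub_sub_sub_cancel_right (∇ (f i) x) (∇ (f i) y) (∇ (f i) xstar)]
          exact norm_sub_sq_le _ _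
    _ = 2 * ∑ i ∈ s, ‖∇ (f i) x - ∇ (f i) xstar‖ ^ 2
          + 2 * ∑ i ∈ s, ‖∇ (f i) y - ∇ (f i) xstar‖ ^ 2 := by
        rw [sum_add_distrib, mul_sum, mul_sum]
    _ ≤ 2 * (2 * L * (∑ i ∈ s, f i x - ∑ i ∈ s, f i xstar))
          + 2 * (2 * L * (∑ i ∈ s, f i y - ∑ i ∈ s, f i xstar)) := by
        gcongr <;> exact sum_sq_norm_gradient_sub_le s hL hconv hdiff hlip hstar _
    _ = _ := by ring

end

/-- mini-batch variance bound for the SVRG gradient estimator, where the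
expectation is the uniform average over all size-`b` subsets of `[n]`. -/
theorem stmt_4 (d n b : ℕ) (hn : 1 < n) (hb : 0 < b) (hbn : b ≤ n)
    (L : ℝ) (hL : 0 < L)
    (f : Fin n → EuclideanSpace ℝ (Fin d) → ℝ)
    (hconv : ∀ i, ConvexOn ℝ Set.univ (f i))
    (hdiff : ∀ i, Differentiable ℝ (f i))
    (hlip : ∀ i x y, ‖gradient (f i) x - gradient (f i) y‖ ≤ L * ‖x - y‖)
    (favg : EuclideanSpace ℝ (Fin d) → ℝ)
    (hfavg : ∀ x, favg x = (1 / n : ℝ) * ∑ i, f i x)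
    (xstar : EuclideanSpace ℝ (Fin d))
    (hmin : ∀ x, favg xstar ≤ favg x)
    (x xt : EuclideanSpace ℝ (Fin d)) :
    ((Finset.powersetCard b (Finset.univ : Finset (Fin n))).card : ℝ)⁻¹ *
        ∑ I ∈ Finset.powersetCard b (Finset.univ : Finset (Fin n)),
          ‖((1 / b : ℝ) • ∑ i ∈ I, (gradient (f i) x - gradient (f i) xt)
              + gradient favg xt) - gradient favg x‖ ^ 2
      ≤ 4 * L * (((n : ℝ) - b) / (((n : ℝ) - 1) * b)) *
          ((favg x - favg xstar) + (favg xt - favg xstar)) := by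
  have hn0 : (n : ℝ) ≠ 0 := by positivity
  have hgrad : ∀ z, ∇ favg z = (1 / n : ℝ) • ∑ i, ∇ (f i) z := fun z => by
    rw [show favg = fun y => (1 / n : ℝ) * ∑ i, f i y from funext hfavg]
    exact gradient_const_mul_sum _ _ fun i _ => hdiff i z
  have hstar : ∑ i, ∇ (f i) xstar = 0 := by
    have h0 : ∇ favg xstar = 0 := IsLocalMin.gradient_eq_zero (Filter.Eventually.of_forall hmin)
    rw [hgrad] at h0
    exact (smul_eq_zero.1 h0).resolve_left (by simpa using hn0)
  have hsum_f : ∀ z, ∑ i, f i z = n * favg z := fun z => by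
    rw [hfavg]; field_simp
  set a : Fin n → EuclideanSpace ℝ (Fin d) := fun i => ∇ (f i) x - ∇ (f i) xt
  have hmean : (#(univ : Finset (Fin n)) : ℝ)⁻¹ • ∑ i, a i = ∇ favg x - ∇ favg xt := by
    rw [card_univ, Fintype.card_fin, hgrad, hgrad, one_div, ← smul_sub, ← sum_sub_distrib]
  have herror : ∀ I : Finset (Fin n), (1 / b : ℝ) • ∑ i ∈ I, a i + ∇ favg xt - ∇ favg x
      = (b : ℝ)⁻¹ • ∑ i ∈ I, a i - (#(univ : Finset (Fin n)) : ℝ)⁻¹ • ∑ i, a i := fun I => by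
    rw [hmean, one_div]
    abel
  have hδ : 0 ≤ ((n : ℝ) - b) / (((n : ℝ) - 1) * b) :=
    div_nonneg (sub_nonneg.2 (by exact_mod_cast hbn))
      (mul_nonneg (sub_nonneg.2 (by exact_mod_cast hn.le)) (Nat.cast_nonneg _))
  simp only [herror]
  rw [average_powersetCard_norm_smul_sum_sub_mean_sq hb (by simpa using hbn) (by simpa using hn) a,
    card_univ, Fintype.card_fin]
  calc ((n : ℝ) - b) / (((n : ℝ) - 1) * b) * ((n : ℝ)⁻¹ * ∑ i, ‖a i - (n : ℝ)⁻¹ • ∑ j, a j‖ ^ 2)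
      ≤ ((n : ℝ) - b) / (((n : ℝ) - 1) * b) * ((n : ℝ)⁻¹ * ∑ i, ‖a i‖ ^ 2) := by
        gcongr _ * (_ * ?_)
        simpa using sum_norm_sub_mean_sq_le univ a
    _ ≤ ((n : ℝ) - b) / (((n : ℝ) - 1) * b) * ((n : ℝ)⁻¹ *
          (4 * L * ((n * favg x - n * favg xstar) + (n * favg xt - n * favg xstar)))) := by
        gcongr _ * (_ * ?_)
        simpa only [hsum_f] using
          sum_sq_norm_gradient_sub_gradient_le univ hL hconv hdiff hlip hstar x xt
    _ = _ := by field_simp
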